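/- Let A ∈ ℝ^{m×n} be arbitrary and D ∈ ℝ^{n×n} symmetric positive definite. If ker(A) is nontrivial and N ∈ ℝ^{n×k} has columns forming a basis of ker(A), then N(NᵀDN)⁻¹Nᵀ = D⁻¹ − D⁻¹Aᵀ(AD⁻¹Aᵀ)†AD⁻¹, where † denotes the Moore–Penrose pseudoinverse. If ker(A) = {0}, then D⁻¹ − D⁻¹Aᵀ(AD⁻¹Aᵀ)†AD⁻¹ = 0. -/

import Mathlib

open Matrix

/-- `Ldag` is the Moore–Penrose pseudoinverse of the (square, real) matrix
`L`: the four Penrose conditions. -/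
def IsMoorePenroseInv {m : ℕ} (L Ldag : Matrix (Fin m) (Fin m) ℝ) : Prop :=
  L * Ldag * L = L ∧ Ldag * L * Ldag = Ldag ∧
    (L * Ldag)ᵀ = L * Ldag ∧ (Ldag * L)ᵀ = Ldag * L

private lemma entry_eq_mulVec_single {a b : ℕ} (M : Matrix (Fin a) (Fin b) ℝ) (i : Fin a)
    (j : Fin b) : (M *ᵥ Pi.single j 1) i = M i j := by
  rw [mulVec_single]; simp

private lemma eq_zero_of_self_mul_posdef {n m : ℕ} {Dinv : Matrix (Fin n) (Fin n) ℝ}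
    (hDinv : Dinv.PosDef) (B : Matrix (Fin m) (Fin n) ℝ) (h : B * Dinv * Bᵀ = 0) : B = 0 := by
  have hrow : ∀ x : Fin m → ℝ, Bᵀ *ᵥ x = 0 := by
    intro x
    by_contra hx
    have hpos := hDinv.dotProduct_mulVec_pos hx
    have h0 : star x ⬝ᵥ ((B * Dinv * Bᵀ) *ᵥ x) = 0 := by rw [h]; simp
    rw [← mulVec_mulVec, ← mulVec_mulVec, dotProduct_mulVec,
      show star x ᵥ* B = Bᵀ *ᵥ x by rw [← vecMul_transpose]; simp] at h0
    simp only [star_trivial] at hpos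
    exact hpos.ne' h0
  ext i j
  have h0 := congrFun (hrow (Pi.single i 1)) j
  rw [entry_eq_mulVec_single Bᵀ j i] at h0
  simpa using h0

/-- Let `A` be arbitrary and `D` symmetric positive definite, and let `Ldag`
be the Moore–Penrose pseudoinverse of `L = A D⁻¹ Aᵀ`.  If `ker(A)` is
nontrivial and the columns of `N` form a basis of `ker(A)` (injectivity of
`N.mulVec` = linear independence; the `↔` = spanning), then
`N (Nᵀ D N)⁻¹ Nᵀ = D⁻¹ − D⁻¹ Aᵀ L† A D⁻¹`.  If `ker(A) = {0}`, then
`D⁻¹ − D⁻¹ Aᵀ L† A D⁻¹ = 0`. -/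
theorem projector_pseudoinverse_representation {m n : ℕ}
    (A : Matrix (Fin m) (Fin n) ℝ) (D : Matrix (Fin n) (Fin n) ℝ)
    (hD : D.PosDef)
    (Ldag : Matrix (Fin m) (Fin m) ℝ)
    (hLdag : IsMoorePenroseInv (A * D⁻¹ * Aᵀ) Ldag) :
    (∀ (k : ℕ) (N : Matrix (Fin n) (Fin k) ℝ), 0 < k →
      Function.Injective N.mulVec →
      (∀ v : Fin n → ℝ, A.mulVec v = 0 ↔ ∃ w : Fin k → ℝ, v = N.mulVec w) →
      N * (Nᵀ * D * N)⁻¹ * Nᵀ = D⁻¹ - D⁻¹ * Aᵀ * Ldag * A * D⁻¹) ∧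
    ((∀ v : Fin n → ℝ, A.mulVec v = 0 → v = 0) →
      D⁻¹ - D⁻¹ * Aᵀ * Ldag * A * D⁻¹ = 0) := by
  obtain ⟨h1, h2, h3, h4⟩ := hLdag
  set L := A * D⁻¹ * Aᵀ with hL
  have hDinv : (D⁻¹).PosDef := hD.inv
  have hDinvsym : (D⁻¹)ᵀ = D⁻¹ := by
    have := hDinv.1
    rwa [IsHermitian, conjTranspose_eq_transpose_of_trivial] at this
  have hDD : D * D⁻¹ = 1 := mul_nonsing_inv _ ((isUnit_iff_isUnit_det D).mp hD.isUnit)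
  have hLsym : Lᵀ = L := by
    rw [hL, transpose_mul, transpose_mul, transpose_transpose, hDinvsym, Matrix.mul_assoc]
  have hLL : L * (L * Ldag) = L := by
    have := congrArg Matrix.transpose h1
    rwa [transpose_mul, h3, hLsym] at this
  -- the key identity: L Ldag A = A
  have hkey : (A - L * Ldag * A) * D⁻¹ * (A - L * Ldag * A)ᵀ = 0 := by
    have hBt : (A - L * Ldag * A)ᵀ = Aᵀ - Aᵀ * (L * Ldag) := by
      rw [transpose_sub, transpose_mul, h3]
    rw [hBt]
    have expand : (A - L * Ldag * A) * D⁻¹ * (Aᵀ - Aᵀ * (L * Ldag))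
        = L - L * (L * Ldag) - ((L * Ldag) * L - (L * Ldag) * (L * (L * Ldag))) := by
      rw [hL]
      simp only [Matrix.sub_mul, Matrix.mul_sub, Matrix.mul_assoc]
      abel
    rw [expand, hLL]
    simp [show L * Ldag * L = L from h1, Matrix.mul_assoc]
  have hB0 : A - L * Ldag * A = 0 := eq_zero_of_self_mul_posdef hDinv _ hkey
  have hLLA : L * Ldag * A = A := (sub_eq_zero.mp hB0).symm
  have hAP : A * (D⁻¹ - D⁻¹ * Aᵀ * Ldag * A * D⁻¹) = 0 := by
    have heq : A * (D⁻¹ - D⁻¹ * Aᵀ * Ldag * A * D⁻¹) = A * D⁻¹ - (L * Ldag * A) * D⁻¹ := by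
      rw [hL]
      simp only [Matrix.sub_mul, Matrix.mul_sub, Matrix.mul_assoc]
    rw [heq, hLLA, sub_self]
  constructor
  · intro k N hk hNinj hker
    have hAN : A * N = 0 := by
      ext i j
      have h := (hker (N *ᵥ Pi.single j 1)).mpr ⟨Pi.single j 1, rfl⟩
      rw [mulVec_mulVec] at h
      have h' := congrFun h i
      rw [entry_eq_mulVec_single (A * N) i j] at h'
      simpa using h'
    have hNA : Nᵀ * Aᵀ = 0 := by rw [← transpose_mul, hAN, transpose_zero]
    have hS : (Nᵀ * D * N).PosDef := by
      refine PosDef.of_dotProduct_mulVec_pos ?_ ?_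
      · rw [IsHermitian, conjTranspose_eq_transpose_of_trivial, transpose_mul, transpose_mul,
          transpose_transpose, show Dᵀ = D by
            have := hD.1; rwa [IsHermitian, conjTranspose_eq_transpose_of_trivial] at this,
          Matrix.mul_assoc]
      · intro x hx
        have hNx : N *ᵥ x ≠ 0 := by
          intro h
          exact hx (hNinj (by rw [h, mulVec_zero]))
        have hpos := hD.dotProduct_mulVec_pos hNx
        simp only [star_trivial] at hpos ⊢
        rw [← mulVec_mulVec, ← mulVec_mulVec, dotProduct_mulVec, vecMul_transpose]
        exact hpos
    have hSdet : IsUnit (Nᵀ * D * N).det := (isUnit_iff_isUnit_det _).mp hS.isUnit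
    have hSinv : (Nᵀ * D * N) * (Nᵀ * D * N)⁻¹ = 1 := mul_nonsing_inv _ hSdet
    have hNDpi : Nᵀ * D * (N * (Nᵀ * D * N)⁻¹ * Nᵀ) = Nᵀ := by
      have heq : Nᵀ * D * (N * (Nᵀ * D * N)⁻¹ * Nᵀ) = ((Nᵀ * D * N) * (Nᵀ * D * N)⁻¹) * Nᵀ := by
        simp only [Matrix.mul_assoc]
      rw [heq, hSinv, Matrix.one_mul]
    have hNDP : Nᵀ * D * (D⁻¹ - D⁻¹ * Aᵀ * Ldag * A * D⁻¹) = Nᵀ := by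
      have heq : Nᵀ * D * (D⁻¹ - D⁻¹ * Aᵀ * Ldag * A * D⁻¹)
          = Nᵀ * (D * D⁻¹) - (Nᵀ * Aᵀ) * (Ldag * (A * D⁻¹)) +
            ((Nᵀ * Aᵀ) * (Ldag * (A * D⁻¹)) - Nᵀ * (D * (D⁻¹ * (Aᵀ * (Ldag * (A * D⁻¹)))))) := by
        simp only [Matrix.sub_mul, Matrix.mul_sub, Matrix.mul_assoc]
        abel
      rw [heq, hDD, hNA, Matrix.mul_one, Matrix.zero_mul]
      have : Nᵀ * (D * (D⁻¹ * (Aᵀ * (Ldag * (A * D⁻¹)))))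
          = (Nᵀ * (D * D⁻¹)) * (Aᵀ * (Ldag * (A * D⁻¹))) := by
        simp only [Matrix.mul_assoc]
      rw [this, hDD, Matrix.mul_one]
      have h0 : Nᵀ * (Aᵀ * (Ldag * (A * D⁻¹))) = (Nᵀ * Aᵀ) * (Ldag * (A * D⁻¹)) := by
        simp only [Matrix.mul_assoc]
      rw [h0, hNA, Matrix.zero_mul]
      abel
    set P := D⁻¹ - D⁻¹ * Aᵀ * Ldag * A * D⁻¹ with hP
    set Pi₀ := N * (Nᵀ * D * N)⁻¹ * Nᵀ with hPi
    have hAR : A * (Pi₀ - P) = 0 := by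
      have heq : A * (Pi₀ - P) = (A * N) * ((Nᵀ * D * N)⁻¹ * Nᵀ) - A * P := by
        rw [hPi]
        simp only [Matrix.mul_sub, Matrix.mul_assoc]
      rw [heq, hAN, hAP, Matrix.zero_mul, sub_self]
    have hNDR : Nᵀ * D * (Pi₀ - P) = 0 := by
      rw [Matrix.mul_sub, hNDpi, hNDP, sub_self]
    have hR : Pi₀ - P = 0 := by
      ext i j
      have hcolker : A *ᵥ ((Pi₀ - P) *ᵥ Pi.single j 1) = 0 := by
        rw [mulVec_mulVec, hAR, zero_mulVec]
      obtain ⟨w, hw⟩ := (hker _).mp hcolker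
      have hSw : (Nᵀ * D * N) *ᵥ w = 0 := by
        have h2' : (Nᵀ * D) *ᵥ ((Pi₀ - P) *ᵥ Pi.single j 1) = (Nᵀ * D) *ᵥ (N *ᵥ w) := by rw [hw]
        rw [mulVec_mulVec, mulVec_mulVec, hNDR, zero_mulVec] at h2'
        exact h2'.symm
      have hw0 : w = 0 := by
        have hinj : Function.Injective ((Nᵀ * D * N).mulVec) :=
          (mulVec_injective_iff_isUnit).mpr hS.isUnit
        apply hinj
        rw [hSw, mulVec_zero]
      have h' := congrFun hw i
      rw [entry_eq_mulVec_single (Pi₀ - P) i j] at h'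
      rw [h', hw0]
      simp
    exact sub_eq_zero.mp hR
  · intro hker
    ext i j
    have hcol : A *ᵥ ((D⁻¹ - D⁻¹ * Aᵀ * Ldag * A * D⁻¹) *ᵥ Pi.single j 1) = 0 := by
      rw [mulVec_mulVec, hAP, zero_mulVec]
    have h' := congrFun (hker _ hcol) i
    rw [entry_eq_mulVec_single (D⁻¹ - D⁻¹ * Aᵀ * Ldag * A * D⁻¹) i j] at h'
    simpa using h'
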